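/- Suppose H satisfies (H1)–(H3) and there exists a continuous function A : ℝ → ℝ⁺ with |p · ∂H/∂p(x,p,u)| ≤ A(H(x,p,u))·(1 + |u|) for all (x,p,u). Then along every integral curve (x(s), p(s), u(s)) of the contact Hamiltonian vector field X_H, the u-component satisfies |u̇(s)| ≤ A₀ · |u(s)| + A₀ + e^{λ|s|}·|H(x(0),p(0),u(0))| where A₀ = sup{A(h) : |h| ≤ e^{λ|t|}|H(x(0),p(0),u(0))|}; in particular |u(s)| remains bounded on every compact time interval [−t, t]. (Estimate in the proof of Lemma A.1.) -/

import Mathlib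

open Filter MeasureTheory Set
open scoped RealInnerProductSpace Topology NNReal

noncomputable section

/-- The model space: the closed manifold `M` is realized as a compact subset of a
Euclidean space (Whitney embedding), and the fibers of `T*M` as Euclidean vectors. -/
abbrev Euc (n : ℕ) := EuclideanSpace ℝ (Fin n)

variable {n : ℕ}

/-- `∂H/∂p`, the gradient of `H` in the momentum variable. -/
def pGrad (H : Euc n → Euc n → ℝ → ℝ) (x p : Euc n) (u : ℝ) : Euc n :=
  gradient (fun q => H x q u) p

/-- `∂H/∂x`, the gradient of `H` in the position variable. -/
def xGrad (H : Euc n → Euc n → ℝ → ℝ) (x p : Euc n) (u : ℝ) : Euc n :=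
  gradient (fun y => H y p u) x

/-- `∂H/∂u`, the derivative of `H` in the value variable. -/
def uDeriv (H : Euc n → Euc n → ℝ → ℝ) (x p : Euc n) (u : ℝ) : ℝ :=
  deriv (fun w => H x p w) u

/-- The contact Hamiltonian vector field
`ẋ = ∂H/∂p, ṗ = −∂H/∂x − (∂H/∂u)p, u̇ = (∂H/∂p)·p − H`. -/
def contactVF (H : Euc n → Euc n → ℝ → ℝ) :
    Euc n × Euc n × ℝ → Euc n × Euc n × ℝ := fun z =>
  (pGrad H z.1 z.2.1 z.2.2,
   -xGrad H z.1 z.2.1 z.2.2 - uDeriv H z.1 z.2.1 z.2.2 • z.2.1,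
   ⟪pGrad H z.1 z.2.1 z.2.2, z.2.1⟫ - H z.1 z.2.1 z.2.2)

/-- (H1) Positive definiteness of `∂²H/∂p²`. -/
def PosDefInP (H : Euc n → Euc n → ℝ → ℝ) : Prop :=
  ∀ x u p v, v ≠ 0 → 0 < ⟪(fderiv ℝ (fun q => pGrad H x q u) p) v, v⟫

/-- (H2) Superlinearity of `H` in `p`. -/
def Superlinear (H : Euc n → Euc n → ℝ → ℝ) : Prop :=
  ∀ x u, Tendsto (fun p : Euc n => H x p u / ‖p‖) (cocompact (Euc n)) atTop

/-- (H3) `|∂H/∂u| ≤ λ`. -/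
def LipInU (H : Euc n → Euc n → ℝ → ℝ) (lam : ℝ) : Prop :=
  ∀ x p u, |uDeriv H x p u| ≤ lam

/-- `H` is a `C³` function. -/
def C3 (H : Euc n → Euc n → ℝ → ℝ) : Prop :=
  ContDiff ℝ 3 (fun z : Euc n × Euc n × ℝ => H z.1 z.2.1 z.2.2)

/-- `L` is the Legendre transform of `H`: `L(x,v,u) = sup_p {⟨p,v⟩ − H(x,p,u)}`. -/
def IsLegendre (H L : Euc n → Euc n → ℝ → ℝ) : Prop :=
  ∀ x v u, L x v u = sSup {r | ∃ p : Euc n, r = ⟪p, v⟫ - H x p u}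

/-- `Φ` is the (complete) flow of the contact Hamiltonian vector field `X_H`. -/
def IsContactFlow (H : Euc n → Euc n → ℝ → ℝ)
    (Φ : ℝ → Euc n × Euc n × ℝ → Euc n × Euc n × ℝ) : Prop :=
  (∀ z, Φ 0 z = z) ∧ ∀ z t, HasDerivAt (fun s => Φ s z) (contactVF H (Φ t z)) t

/-- Absolutely continuous curve on `[a,b]`: an indefinite integral of an integrable map. -/
def AbsCont (γ : ℝ → Euc n) (a b : ℝ) : Prop :=
  ∃ g : ℝ → Euc n, IntervalIntegrable g volume a b ∧
    ∀ s ∈ Icc a b, γ s = γ a + ∫ τ in a..s, g τ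

/-- The superdifferential `D⁺φ(x)` of `φ` at `x` (relative to `M`):
`limsup_{y→x} (φ(y) − φ(x) − ⟨p, y−x⟩)/|y−x| ≤ 0`. -/
def SuperDiff (M : Set (Euc n)) (φ : Euc n → ℝ) (x : Euc n) : Set (Euc n) :=
  {p | ∀ ε > (0:ℝ), ∀ᶠ y in 𝓝[M \ {x}] x,
      φ y - φ x - ⟪p, y - x⟫ ≤ ε * ‖y - x‖}

/-- `φ` is a viscosity subsolution of `H(x,∂ₓu,u) = c` on `U`:
`H(x,p,φ(x)) ≤ c` for every `x ∈ U` and `p ∈ D⁺φ(x)`. -/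
def IsVSub (M : Set (Euc n)) (H : Euc n → Euc n → ℝ → ℝ) (c : ℝ)
    (φ : Euc n → ℝ) (U : Set (Euc n)) : Prop :=
  ∀ x ∈ U, ∀ p ∈ SuperDiff M φ x, H x p (φ x) ≤ c

/-- `φ` is a strict viscosity subsolution of `H(x,∂ₓu,u) = 0` on `M`: a viscosity
subsolution which is strict at every point of `M`. -/
def IsStrictVSub (M : Set (Euc n)) (H : Euc n → Euc n → ℝ → ℝ)
    (φ : Euc n → ℝ) : Prop :=
  IsVSub M H 0 φ M ∧
  ∀ x₀ ∈ M, ∃ V : Set (Euc n), IsOpen V ∧ x₀ ∈ V ∧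
    ∃ c < (0:ℝ), IsVSub M H c φ (V ∩ M)

/-- The backward solution semigroup `T_t⁻`: the continuous function satisfying
`T_t⁻φ(x) = inf_{γ(t)=x} {φ(γ(0)) + ∫₀ᵗ L(γ,γ̇,T_τ⁻φ(γ(τ))) dτ}` over absolutely
continuous curves in `M`. -/
def IsBackwardSemigroup (M : Set (Euc n)) (L : Euc n → Euc n → ℝ → ℝ)
    (φ : Euc n → ℝ) (Tm : ℝ → Euc n → ℝ) : Prop :=
  (∀ x ∈ M, Tm 0 x = φ x) ∧
  ContinuousOn (fun q : ℝ × Euc n => Tm q.1 q.2) (Ici 0 ×ˢ M) ∧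
  ∀ t > (0:ℝ), ∀ x ∈ M,
    Tm t x = sInf {r | ∃ γ : ℝ → Euc n, AbsCont γ 0 t ∧
      (∀ τ ∈ Icc (0:ℝ) t, γ τ ∈ M) ∧ γ t = x ∧
      r = φ (γ 0) + ∫ τ in (0:ℝ)..t, L (γ τ) (deriv γ τ) (Tm τ (γ τ))}

/-- The forward solution semigroup `T_t⁺`: the continuous function satisfying
`T_t⁺φ(x) = sup_{γ(0)=x} {φ(γ(t)) − ∫₀ᵗ L(γ,γ̇,T_{t−τ}⁺φ(γ(τ))) dτ}` over absolutely
continuous curves in `M`. -/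
def IsForwardSemigroup (M : Set (Euc n)) (L : Euc n → Euc n → ℝ → ℝ)
    (φ : Euc n → ℝ) (Tp : ℝ → Euc n → ℝ) : Prop :=
  (∀ x ∈ M, Tp 0 x = φ x) ∧
  ContinuousOn (fun q : ℝ × Euc n => Tp q.1 q.2) (Ici 0 ×ˢ M) ∧
  ∀ t > (0:ℝ), ∀ x ∈ M,
    Tp t x = sSup {r | ∃ γ : ℝ → Euc n, AbsCont γ 0 t ∧
      (∀ τ ∈ Icc (0:ℝ) t, γ τ ∈ M) ∧ γ 0 = x ∧
      r = φ (γ t) - ∫ τ in (0:ℝ)..t, L (γ τ) (deriv γ τ) (Tp (t - τ) (γ τ))}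

/-- The backward implicit action function `h_{x₀,u₀}(x,t)`, characterized by the
implicit variational principle over Lipschitz curves. -/
def IsBackwardAction (M : Set (Euc n)) (L : Euc n → Euc n → ℝ → ℝ)
    (hb : Euc n → ℝ → Euc n → ℝ → ℝ) : Prop :=
  ContinuousOn (fun q : Euc n × ℝ × Euc n × ℝ => hb q.1 q.2.1 q.2.2.1 q.2.2.2)
    (M ×ˢ (univ : Set ℝ) ×ˢ M ×ˢ Ioi 0) ∧
  ∀ x₀ ∈ M, ∀ u₀ : ℝ, ∀ x ∈ M, ∀ t > (0:ℝ),
    hb x₀ u₀ x t = u₀ + sInf {a | ∃ γ : ℝ → Euc n,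
      (∃ K : ℝ≥0, LipschitzOnWith K γ (Icc 0 t)) ∧
      (∀ τ ∈ Icc (0:ℝ) t, γ τ ∈ M) ∧ γ 0 = x₀ ∧ γ t = x ∧
      a = ∫ τ in (0:ℝ)..t, L (γ τ) (deriv γ τ) (hb x₀ u₀ (γ τ) τ)}

/-- The forward implicit action function `h^{x₀,u₀}(x,t)`, characterized by the
implicit variational principle over Lipschitz curves. -/
def IsForwardAction (M : Set (Euc n)) (L : Euc n → Euc n → ℝ → ℝ)
    (hf : Euc n → ℝ → Euc n → ℝ → ℝ) : Prop :=
  ContinuousOn (fun q : Euc n × ℝ × Euc n × ℝ => hf q.1 q.2.1 q.2.2.1 q.2.2.2)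
    (M ×ˢ (univ : Set ℝ) ×ˢ M ×ˢ Ioi 0) ∧
  ∀ x₀ ∈ M, ∀ u₀ : ℝ, ∀ x ∈ M, ∀ t > (0:ℝ),
    hf x₀ u₀ x t = u₀ - sInf {a | ∃ γ : ℝ → Euc n,
      (∃ K : ℝ≥0, LipschitzOnWith K γ (Icc 0 t)) ∧
      (∀ τ ∈ Icc (0:ℝ) t, γ τ ∈ M) ∧ γ 0 = x ∧ γ t = x₀ ∧
      a = ∫ τ in (0:ℝ)..t, L (γ τ) (deriv γ τ) (hf x₀ u₀ (γ τ) (t - τ))}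

/-- The epigraph `Γ_φ = {(x,p,u) ∈ T*M × ℝ : u ≥ φ(x)}`. -/
def Epi (M : Set (Euc n)) (φ : Euc n → ℝ) : Set (Euc n × Euc n × ℝ) :=
  {z | z.1 ∈ M ∧ φ z.1 ≤ z.2.2}

/-- The interior `Γ̊_φ = {(x,p,u) ∈ T*M × ℝ : u > φ(x)}` of the epigraph. -/
def EpiInt (M : Set (Euc n)) (φ : Euc n → ℝ) : Set (Euc n × Euc n × ℝ) :=
  {z | z.1 ∈ M ∧ φ z.1 < z.2.2}

/-- Piecewise `C¹` curve on `[a,b]`. -/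
def PiecewiseC1On (γ : ℝ → Euc n) (a b : ℝ) : Prop :=
  ContinuousOn γ (Icc a b) ∧
  ∃ (k : ℕ) (τ : ℕ → ℝ), τ 0 = a ∧ τ k = b ∧ (∀ i < k, τ i < τ (i + 1)) ∧
    ∀ i < k, ContDiffOn ℝ 1 γ (Icc (τ i) (τ (i + 1)))

/-!
Along an integral curve of `X_H` the Hamiltonian satisfies `d/ds H = -(∂H/∂u) H`: the `x`- and
`p`-terms cancel. By (H3) and Grönwall, `|H(γ s)| ≤ e^{λ|s|} |H(γ 0)|`, so on `[-T, T]` the values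
of `H` stay in `[-R, R]` with `R = e^{λT} |H(γ 0)|`, where the continuous `A` is bounded by `A₀`.
The bound on `u̇ = p·∂H/∂p - H` then follows from the growth hypothesis on `p·∂H/∂p`.
-/

theorem fderiv_apply_prod_eq_add {𝕜 E F G : Type*} [NontriviallyNormedField 𝕜]
    [NormedAddCommGroup E] [NormedSpace 𝕜 E] [NormedAddCommGroup F] [NormedSpace 𝕜 F]
    [NormedAddCommGroup G] [NormedSpace 𝕜 G] {f : E × F → G} {z : E × F}
    (hf : DifferentiableAt 𝕜 f z) (a : E) (b : F) :
    fderiv 𝕜 f z (a, b) =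
      fderiv 𝕜 (fun x => f (x, z.2)) z.1 a + fderiv 𝕜 (fun y => f (z.1, y)) z.2 b := by
  have hl : HasFDerivAt (fun x => f (x, z.2)) ((fderiv 𝕜 f z).comp (.inl 𝕜 E F)) z.1 :=
    hf.hasFDerivAt.comp z.1 (hasFDerivAt_prodMk_left z.1 z.2)
  have hr : HasFDerivAt (fun y => f (z.1, y)) ((fderiv 𝕜 f z).comp (.inr 𝕜 E F)) z.2 :=
    hf.hasFDerivAt.comp z.2 (hasFDerivAt_prodMk_right z.1 z.2)
  rw [hl.fderiv, hr.fderiv]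
  exact ((fderiv 𝕜 f z).comp_inl_add_comp_inr (a, b)).symm

theorem norm_le_exp_mul_norm_of_norm_deriv_le {E : Type*} [NormedAddCommGroup E]
    [NormedSpace ℝ E] {f f' : ℝ → E} {K b : ℝ} (hb : 0 ≤ b)
    (hf : ∀ t ∈ Icc 0 b, HasDerivAt f (f' t) t) (bound : ∀ t ∈ Icc 0 b, ‖f' t‖ ≤ K * ‖f t‖) :
    ‖f b‖ ≤ Real.exp (K * b) * ‖f 0‖ := by
  have h := norm_le_gronwallBound_of_norm_deriv_right_le
    (fun t ht => (hf t ht).continuousAt.continuousWithinAt)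
    (fun t ht => (hf t (Ico_subset_Icc_self ht)).hasDerivWithinAt) le_rfl
    (ε := 0) (fun t ht => (bound t (Ico_subset_Icc_self ht)).trans_eq (add_zero _).symm)
    b ⟨hb, le_rfl⟩
  rwa [gronwallBound_ε0, sub_zero, mul_comm] at h

theorem norm_le_exp_mul_abs_mul_norm_of_norm_deriv_le {E : Type*} [NormedAddCommGroup E]
    [NormedSpace ℝ E] {f f' : ℝ → E} {K T : ℝ}
    (hf : ∀ t ∈ Icc (-T) T, HasDerivAt f (f' t) t)
    (bound : ∀ t ∈ Icc (-T) T, ‖f' t‖ ≤ K * ‖f t‖) {s : ℝ} (hs : s ∈ Icc (-T) T) :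
    ‖f s‖ ≤ Real.exp (K * |s|) * ‖f 0‖ := by
  rcases le_total 0 s with h0s | hs0
  · have hsub : Icc 0 s ⊆ Icc (-T) T := Icc_subset_Icc (by linarith [hs.2]) hs.2
    rw [abs_of_nonneg h0s]
    exact norm_le_exp_mul_norm_of_norm_deriv_le h0s (fun t ht => hf t (hsub ht))
      (fun t ht => bound t (hsub ht))
  · have hsub : ∀ t ∈ Icc 0 (-s), -t ∈ Icc (-T) T := fun t ht =>
      ⟨by linarith [ht.2, hs.1], by linarith [ht.1, hs.1, hs.2]⟩
    have h := norm_le_exp_mul_norm_of_norm_deriv_le (f := fun t => f (-t))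
      (f' := fun t => -f' (-t)) (neg_nonneg.mpr hs0)
      (fun t ht => by
        simpa [Function.comp_def] using (hf (-t) (hsub t ht)).scomp t (hasDerivAt_neg t))
      (fun t ht => by simpa using bound (-t) (hsub t ht))
    simpa [abs_of_nonpos hs0] using h

theorem le_csSup_image_abs_le {A : ℝ → ℝ} (hA : Continuous A) {R x : ℝ} (hx : |x| ≤ R) :
    A x ≤ sSup (A '' {h : ℝ | |h| ≤ R}) :=
  le_csSup ((isCompact_Icc.image hA).bddAbove.mono (image_mono fun _ hx => abs_le.mp hx))
    ⟨x, hx, rfl⟩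

section ContactHamiltonian

variable {n : ℕ} {H : Euc n → Euc n → ℝ → ℝ}

theorem fderiv_hamiltonian_apply (hC3 : C3 H) (z : Euc n × Euc n × ℝ) (a b : Euc n) (c : ℝ) :
    fderiv ℝ (fun w : Euc n × Euc n × ℝ => H w.1 w.2.1 w.2.2) z (a, b, c) =
      ⟪xGrad H z.1 z.2.1 z.2.2, a⟫ + ⟪pGrad H z.1 z.2.1 z.2.2, b⟫ +
        uDeriv H z.1 z.2.1 z.2.2 * c := by
  have hF : Differentiable ℝ (fun w : Euc n × Euc n × ℝ => H w.1 w.2.1 w.2.2) :=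
    hC3.differentiable (by norm_num)
  have hF' : Differentiable ℝ (fun y : Euc n × ℝ => H z.1 y.1 y.2) :=
    hF.comp ((differentiable_const z.1).prodMk differentiable_id)
  rw [fderiv_apply_prod_eq_add (hF z)]
  dsimp only
  rw [fderiv_apply_prod_eq_add (hF' z.2)]
  simp [xGrad, pGrad, uDeriv, gradient, InnerProductSpace.toDual_symm_apply, add_assoc, mul_comm]

theorem hasDerivAt_hamiltonian_along_contactVF (hC3 : C3 H) {γ : ℝ → Euc n × Euc n × ℝ} {s : ℝ}
    (hγ : HasDerivAt γ (contactVF H (γ s)) s) :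
    HasDerivAt (fun t => H (γ t).1 (γ t).2.1 (γ t).2.2)
      (-(uDeriv H (γ s).1 (γ s).2.1 (γ s).2.2 * H (γ s).1 (γ s).2.1 (γ s).2.2)) s := by
  have hF := ((hC3.differentiable (by norm_num)) (γ s)).hasFDerivAt.comp_hasDerivAt s hγ
  refine hF.congr_deriv ?_
  simp only [contactVF, fderiv_hamiltonian_apply hC3, inner_sub_right,
    inner_neg_right, real_inner_smul_right, real_inner_comm (xGrad H _ _ _)]
  ring

theorem abs_hamiltonian_le_exp_mul {lam T : ℝ} (hC3 : C3 H) (hH3 : LipInU H lam)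
    {γ : ℝ → Euc n × Euc n × ℝ} (hODE : ∀ s ∈ Icc (-T) T, HasDerivAt γ (contactVF H (γ s)) s)
    {s : ℝ} (hs : s ∈ Icc (-T) T) :
    |H (γ s).1 (γ s).2.1 (γ s).2.2| ≤
      Real.exp (lam * |s|) * |H (γ 0).1 (γ 0).2.1 (γ 0).2.2| :=
  norm_le_exp_mul_abs_mul_norm_of_norm_deriv_le
    (fun t ht => hasDerivAt_hamiltonian_along_contactVF hC3 (hODE t ht))
    (fun t _ => by
      rw [norm_neg, norm_mul]
      exact mul_le_mul_of_nonneg_right (hH3 _ _ _) (norm_nonneg _)) hs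

theorem abs_contactVF_u_le (z : Euc n × Euc n × ℝ) :
    |(contactVF H z).2.2| ≤ |⟪z.2.1, pGrad H z.1 z.2.1 z.2.2⟫| + |H z.1 z.2.1 z.2.2| := by
  rw [real_inner_comm]
  exact abs_sub _ _

end ContactHamiltonian

theorem u_component_estimate_along_flow_general {n : ℕ}
    (H : Euc n → Euc n → ℝ → ℝ) (lam : ℝ)
    (hC3 : C3 H) (hH3 : LipInU H lam)
    (A : ℝ → ℝ) (hAcont : Continuous A)
    (hbound : ∀ (x p : Euc n) (u : ℝ),
      |⟪p, pGrad H x p u⟫| ≤ A (H x p u) * (1 + |u|))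
    (T : ℝ) (γ : ℝ → Euc n × Euc n × ℝ)
    (hODE : ∀ s ∈ Icc (-T) T, HasDerivAt γ (contactVF H (γ s)) s) :
    (∀ s ∈ Icc (-T) T,
      |(contactVF H (γ s)).2.2| ≤
        sSup (A '' {h : ℝ | |h| ≤ Real.exp (lam * T) * |H (γ 0).1 (γ 0).2.1 (γ 0).2.2|})
            * |(γ s).2.2|
          + sSup (A '' {h : ℝ | |h| ≤ Real.exp (lam * T) * |H (γ 0).1 (γ 0).2.1 (γ 0).2.2|})
          + Real.exp (lam * |s|) * |H (γ 0).1 (γ 0).2.1 (γ 0).2.2|) ∧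
    (∃ C : ℝ, ∀ s ∈ Icc (-T) T, |(γ s).2.2| ≤ C) := by
  have hlam : 0 ≤ lam := (abs_nonneg _).trans (hH3 0 0 0)
  refine ⟨fun s hs => ?_, ?_⟩
  · have hHs := abs_hamiltonian_le_exp_mul hC3 hH3 hODE hs
    have hA := le_csSup_image_abs_le (R := Real.exp (lam * T) * _) hAcont
      (hHs.trans (by gcongr; exact abs_le.mpr hs))
    calc |(contactVF H (γ s)).2.2|
        ≤ A (H (γ s).1 (γ s).2.1 (γ s).2.2) * (1 + |(γ s).2.2|)
            + Real.exp (lam * |s|) * |H (γ 0).1 (γ 0).2.1 (γ 0).2.2| :=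
          (abs_contactVF_u_le (γ s)).trans (add_le_add (hbound _ _ _) hHs)
      _ ≤ _ := by linarith [mul_le_mul_of_nonneg_right hA (abs_nonneg (γ s).2.2)]
  · obtain ⟨C, hC⟩ := isCompact_Icc.exists_bound_of_continuousOn
      (continuous_snd.comp continuous_snd |>.comp_continuousOn
        fun s hs => (hODE s hs).continuousAt.continuousWithinAt)
    exact ⟨C, hC⟩

/-- **Estimate in the proof of Lemma A.1**: under the bound
`|p·∂H/∂p| ≤ A(H)(1+|u|)`, along every integral curve of `X_H` on `[−T,T]` the
`u`-component satisfies `|u̇(s)| ≤ A₀|u(s)| + A₀ + e^{λ|s|}|H(γ(0))|`, where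
`A₀ = sup {A(h) : |h| ≤ e^{λT}|H(γ(0))|}`; in particular `|u(s)|` is bounded on `[−T,T]`. -/
theorem u_component_estimate_along_flow {n : ℕ}
    (H : Euc n → Euc n → ℝ → ℝ) (lam : ℝ) (hlam : 0 < lam)
    (hC3 : C3 H) (hH1 : PosDefInP H) (hH2 : Superlinear H) (hH3 : LipInU H lam)
    (A : ℝ → ℝ) (hAcont : Continuous A) (hApos : ∀ h, 0 < A h)
    (hbound : ∀ (x p : Euc n) (u : ℝ),
      |⟪p, pGrad H x p u⟫| ≤ A (H x p u) * (1 + |u|))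
    (T : ℝ) (hT : 0 ≤ T) (γ : ℝ → Euc n × Euc n × ℝ)
    (hODE : ∀ s ∈ Icc (-T) T, HasDerivAt γ (contactVF H (γ s)) s) :
    (∀ s ∈ Icc (-T) T,
      |(contactVF H (γ s)).2.2| ≤
        sSup (A '' {h : ℝ | |h| ≤ Real.exp (lam * T) * |H (γ 0).1 (γ 0).2.1 (γ 0).2.2|})
            * |(γ s).2.2|
          + sSup (A '' {h : ℝ | |h| ≤ Real.exp (lam * T) * |H (γ 0).1 (γ 0).2.1 (γ 0).2.2|})
          + Real.exp (lam * |s|) * |H (γ 0).1 (γ 0).2.1 (γ 0).2.2|) ∧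
    (∃ C : ℝ, ∀ s ∈ Icc (-T) T, |(γ s).2.2| ≤ C) :=
  u_component_estimate_along_flow_general H lam hC3 hH3 A hAcont hbound T γ hODE

end
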